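/- Let A = (a_1, …, a_n) and B = (b_0, …, b_{n−1}) be sequences of elements of S and D ⊆ S of size k − n − 1, with A, B, D pairwise disjoint, and let B* be obtained from B by interchanging two of its entries. Then P_D(A, B*) = (−1)^{t+1} P_D(A, B). -/

import Mathlib

/-- `detCols L` is the determinant of the `k × k` matrix whose `j`-th column is the
`j`-th entry of the list `L` (lists of length ≠ `k` are padded with `0`). -/
def detCols {F : Type} [CommRing F] {k : ℕ} (L : List (Fin k → F)) : F :=
  Matrix.det (Matrix.of fun i j : Fin k => L.getD (j : ℕ) 0 i)

/-- The Segre product `P_D(A, B)` of the sequences `A = (a_1, …, a_n)` and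
`B = (b_0, …, b_{n−1})` with base `D`, with respect to the family of tangent functions `T`:
`∏_{i=1}^n T_{D ∪ {a_1,…,a_{i−1},b_i,…,b_{n−1}}}(a_i) ·
  T_{D ∪ {a_1,…,a_{i−1},b_i,…,b_{n−1}}}(b_{i−1})⁻¹`. -/
def segreP {F : Type} [Field F] [DecidableEq F] {k : ℕ}
    (T : Finset (Fin k → F) → (Fin k → F) → F)
    (D : Finset (Fin k → F)) (A B : List (Fin k → F)) : F :=
  ∏ j ∈ Finset.range A.length,
    (T (D ∪ (A.take j).toFinset ∪ (B.drop (j + 1)).toFinset) (A.getD j 0) *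
      (T (D ∪ (A.take j).toFinset ∪ (B.drop (j + 1)).toFinset) (B.getD j 0))⁻¹)

/-- `T` is a family of tangent functions for `S` (with `t` tangent hyperplanes through
each subset of size `k − 2`): for every `Y ⊆ S` with `|Y| = k − 2` there is a set `Φ` of
`t` pairwise linearly independent linear forms, each vanishing on `Y` and nonzero at every
vector of `S \ Y`, with `T Y = ∏_{α ∈ Φ} α`. -/
def IsTangentFamily {F : Type} [Field F] [DecidableEq F] {k : ℕ} (t : ℕ)
    (S : Finset (Fin k → F)) (T : Finset (Fin k → F) → (Fin k → F) → F) : Prop :=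
  ∀ Y : Finset (Fin k → F), Y ⊆ S → Y.card = k - 2 →
    ∃ Φ : Finset ((Fin k → F) →ₗ[F] F),
      Φ.card = t ∧
      (∀ α ∈ Φ, ∀ β ∈ Φ, α ≠ β → ∀ c : F, α ≠ c • β) ∧
      (∀ α ∈ Φ, ∀ y ∈ Y, α y = 0) ∧
      (∀ α ∈ Φ, ∀ s ∈ S, s ∉ Y → α s ≠ 0) ∧
      (∀ x, T Y x = ∏ α ∈ Φ, α x)

/-- The subsequence of `L` consisting of the entries whose positions lie in `s`,
in their original order (`d` is a default value). -/
def subseq {α : Type} (d : α) (L : List α) (s : Finset ℕ) : List α :=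
  ((List.range L.length).filter (fun i => decide (i ∈ s))).map (fun i => L.getD i d)

/-- The subsequence of `L` consisting of the entries whose positions do not lie in `s`,
in their original order (`d` is a default value). -/
def subseqC {α : Type} (d : α) (L : List α) (s : Finset ℕ) : List α :=
  ((List.range L.length).filter (fun i => decide (i ∉ s))).map (fun i => L.getD i d)

/-- The number of transpositions needed (counted as the number of inversions) to reorder a
list of length `len` so that the entries in positions `s` occupy the last `|s|` positions,
preserving the relative order of the two groups. -/
def invCount (s : Finset ℕ) (len : ℕ) : ℕ :=
  ((Finset.range len ×ˢ Finset.range len).filter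
    (fun ij => ij.1 ∈ s ∧ ij.2 ∉ s ∧ ij.1 < ij.2)).card

/-!
Segre's lemma of tangents: for `Y ⊆ S` of size `k - 2` and `a, b ∈ S \ Y`, the forms vanishing on
`Y` form a plane, and each such form `γ` has a slope `γ b / γ a`. The `t` tangents at `Y` and the
`|S| - k` hyperplanes joining `Y` to the remaining points of `S` have pairwise distinct nonzero
slopes, and there are `q - 1` of them, so their product is `-1` by Wilson's theorem. Doing this
for the three subsets `E ∪ {x}`, `E ∪ {y}`, `E ∪ {z}` of a `k`-subset `E ∪ {x, y, z}` and
multiplying, the secant slopes cancel up to sign, which gives the triangle identity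
`T_{E+x}(y) T_{E+y}(z) T_{E+z}(x) = (-1)^{t+1} T_{E+x}(z) T_{E+y}(x) T_{E+z}(y)`.

Interchanging two adjacent entries `b_i, b_{i+1}` of `B` changes only the factors `i` and `i + 1`
of the Segre product, and the quotient of the new and old pairs of factors is exactly a triangle
identity with `E = D ∪ {a_0, …, a_{i-1}} ∪ {b_{i+2}, …, b_{n-1}}`. A general transposition is the
conjugate of a shorter one by an adjacent transposition, and the three signs multiply to
`(-1)^{t+1}`.
-/

open Finset

theorem FiniteField.prod_eq_neg_one_of_card {F : Type} [Field F] [Fintype F] [DecidableEq F]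
    {s : Finset F} (h0 : 0 ∉ s) (hs : s.card = Fintype.card F - 1) : ∏ x ∈ s, x = -1 := by
  have hs' : s = univ.erase 0 :=
    eq_of_subset_of_card_le (fun x hx => mem_erase.2 ⟨ne_of_mem_of_not_mem hx h0, mem_univ x⟩)
      (by rw [card_erase_of_mem (mem_univ _), card_univ, hs])
  have hunits : ∏ x ∈ univ.erase (0 : F), x = ∏ u : Fˣ, (u : F) :=
    prod_bij' (fun x hx => Units.mk0 x (mem_erase.1 hx).1) (fun u _ => (u : F))
      (by simp) (by simp) (by simp) (by simp) (by simp)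
  rw [hs', hunits, ← Units.coe_prod, FiniteField.prod_univ_units_id_eq_neg_one, Units.val_neg,
    Units.val_one]

theorem FiniteField.neg_one_pow_eq_of_add_eq {F : Type} [Field F] [Fintype F] {m t : ℕ}
    (h : m + t = Fintype.card F - 1) : (-1 : F) ^ m = (-1) ^ t := by
  have hsq : (-1 : F) ^ t * (-1) ^ t = 1 := by rw [← mul_pow]; simp
  calc (-1 : F) ^ m = (-1) ^ (m + t) * (-1) ^ t := by rw [pow_add, mul_assoc, hsq, mul_one]
    _ = (-1) ^ t := by
      rw [h, FiniteField.pow_card_sub_one_eq_one _ (neg_ne_zero.2 one_ne_zero), one_mul]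

theorem Finset.mem_sdiff_insert_insert {α : Type} [DecidableEq α] {s t : Finset α} {a b c : α} :
    c ∈ s \ insert a (insert b t) ↔ c ∈ s ∧ c ∉ t ∧ c ≠ a ∧ c ≠ b := by
  simp only [mem_sdiff, mem_insert, not_or]
  tauto

theorem Finset.prod_neg_div_mul_prod_neg_div_mul_prod_neg_div {ι F : Type} [Field F]
    {s : Finset ι} {f g h : ι → F} (hf : ∀ i ∈ s, f i ≠ 0) (hg : ∀ i ∈ s, g i ≠ 0)
    (hh : ∀ i ∈ s, h i ≠ 0) :
    (∏ i ∈ s, -(f i / g i)) * (∏ i ∈ s, -(h i / f i)) * (∏ i ∈ s, -(g i / h i)) =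
      (-1) ^ s.card := by
  rw [← prod_mul_distrib, ← prod_mul_distrib, ← prod_const]
  refine prod_congr rfl fun i hi => ?_
  have := hf i hi
  have := hg i hi
  have := hh i hi
  field_simp

theorem Finset.image_comp_swap {α β : Type} [DecidableEq α] [DecidableEq β] {s : Finset α}
    {i j : α} (h : i ∈ s ↔ j ∈ s) (f : α → β) : s.image (f ∘ Equiv.swap i j) = s.image f := by
  rw [← image_image]
  congr 1
  refine eq_of_subset_of_card_le (fun x hx => ?_) (card_image_of_injective _ (Equiv.injective _)).ge
  obtain ⟨y, hy, rfl⟩ := mem_image.1 hx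
  rw [Equiv.swap_apply_def]
  split_ifs with hyi hyj
  · exact h.1 (hyi ▸ hy)
  · exact h.2 (hyj ▸ hy)
  · exact hy

theorem Finset.prod_eq_mul_prod_of_pair {ι M : Type} [DecidableEq ι] [CommMonoid M]
    {s : Finset ι} {i j : ι} (hi : i ∈ s) (hj : j ∈ s) (hij : i ≠ j) {f g : ι → M} {c : M}
    (hpair : g i * g j = c * (f i * f j)) (hrest : ∀ m ∈ s, m ≠ i → m ≠ j → g m = f m) :
    ∏ m ∈ s, g m = c * ∏ m ∈ s, f m := by
  have hj' : j ∈ s.erase i := mem_erase.2 ⟨hij.symm, hj⟩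
  rw [← mul_prod_erase s g hi, ← mul_prod_erase _ g hj', ← mul_prod_erase s f hi,
    ← mul_prod_erase _ f hj', prod_congr rfl fun m hm => hrest m (mem_of_mem_erase
      (mem_of_mem_erase hm)) (ne_of_mem_erase (mem_of_mem_erase hm)) (ne_of_mem_erase hm),
    ← mul_assoc, hpair, mul_assoc, mul_assoc]

theorem List.toFinset_take_eq_image {α : Type} [DecidableEq α] (L : List α) (d : α) {m : ℕ}
    (hm : m ≤ L.length) : (L.take m).toFinset = (Finset.range m).image (L.getD · d) := by
  ext v
  simp only [List.mem_toFinset, List.mem_take_iff_getElem, Finset.mem_image, Finset.mem_range,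
    lt_min_iff]
  constructor
  · rintro ⟨l, hl, rfl⟩
    exact ⟨l, hl.1, by simp [List.getElem?_eq_getElem hl.2]⟩
  · rintro ⟨l, hl, rfl⟩
    exact ⟨l, ⟨hl, by omega⟩, by simp [List.getElem?_eq_getElem (by omega : l < L.length)]⟩

theorem List.toFinset_drop_eq_image {α : Type} [DecidableEq α] (L : List α) (d : α) (m : ℕ) :
    (L.drop m).toFinset = (Finset.Ico m L.length).image (L.getD · d) := by
  ext v
  simp only [List.mem_toFinset, List.mem_drop_iff_getElem, Finset.mem_image, Finset.mem_Ico]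
  constructor
  · rintro ⟨l, hl, rfl⟩
    exact ⟨m + l, by omega, by simp [List.getElem?_eq_getElem (by omega : m + l < L.length)]⟩
  · rintro ⟨l, hl, rfl⟩
    exact ⟨l - m, by omega, by simp [List.getElem?_eq_getElem hl.2, Nat.add_sub_cancel' hl.1]⟩

theorem List.getD_set_set_swap {α : Type} (L : List α) (d : α) {i j : ℕ} (hi : i < L.length)
    (hj : j < L.length) (m : ℕ) :
    ((L.set i (L.getD j d)).set j (L.getD i d)).getD m d = L.getD (Equiv.swap i j m) d := by
  simp only [List.getD_eq_getElem?_getD, List.getElem?_set, Equiv.swap_apply_def]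
  split_ifs <;> grind

section Arc

variable {F : Type} [Field F] {k : ℕ}

-- Spanning suffices: `k` vectors spanning `F^k` form a basis.
def IsArc (S : Finset (Fin k → F)) : Prop :=
  ∀ W ⊆ S, W.card = k → Submodule.span F (W : Set (Fin k → F)) = ⊤

variable {S : Finset (Fin k → F)}

theorem IsArc.eq_zero_of_forall_apply_eq_zero (hS : IsArc S) {W : Finset (Fin k → F)}
    (hW : W ⊆ S) (hWc : W.card = k) {φ : (Fin k → F) →ₗ[F] F} (hφ : ∀ w ∈ W, φ w = 0) :
    φ = 0 :=
  LinearMap.ext_on (hS W hW hWc) fun x hx => by simpa using hφ x hx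

theorem IsArc.eq_zero_of_vanishes_insert_insert [DecidableEq F] (hS : IsArc S) (hk : 2 ≤ k)
    {Y : Finset (Fin k → F)} (hY : Y ⊆ S) (hYc : Y.card = k - 2) {u v : Fin k → F}
    (hu : u ∈ S) (hv : v ∈ S) (huY : u ∉ Y) (hvY : v ∉ Y) (huv : u ≠ v)
    {φ : (Fin k → F) →ₗ[F] F} (hφY : ∀ y ∈ Y, φ y = 0) (hφu : φ u = 0) (hφv : φ v = 0) :
    φ = 0 := by
  refine hS.eq_zero_of_forall_apply_eq_zero (W := insert u (insert v Y))
    (insert_subset hu (insert_subset hv hY)) ?_ ?_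
  · rw [card_insert_of_notMem (by simp [huv, huY]), card_insert_of_notMem hvY, hYc]
    omega
  · simp only [mem_insert, forall_eq_or_imp]
    exact ⟨hφu, hφv, hφY⟩

theorem IsArc.exists_dual [DecidableEq F] (hS : IsArc S) {W : Finset (Fin k → F)} (hW : W ⊆ S)
    (hWc : W.card = k) {w : Fin k → F} (hw : w ∈ W) :
    ∃ φ : (Fin k → F) →ₗ[F] F, φ w = 1 ∧ ∀ v ∈ W, v ≠ w → φ v = 0 := by
  let β := basisOfTopLeSpanOfCardEqFinrank (R := F) (fun v : W => (v : Fin k → F))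
    (by rw [Subtype.range_coe_subtype]; exact (hS W hW hWc).ge) (by simp [hWc])
  have hcoord : ∀ v (hv : v ∈ W), β.coord ⟨w, hw⟩ v = if v = w then 1 else 0 := by
    intro v hv
    have hβ : β ⟨v, hv⟩ = v := by simp [β, basisOfTopLeSpanOfCardEqFinrank]
    rw [← hβ, Module.Basis.coord_apply, Module.Basis.repr_self, Finsupp.single_apply, hβ]
    simp [eq_comm]
  exact ⟨β.coord ⟨w, hw⟩, by simp [hcoord w hw], fun v hv hvw => by simp [hcoord v hv, hvw]⟩

end Arc

section Pencil

variable {F : Type} [Field F] [DecidableEq F] {k : ℕ} {S Y : Finset (Fin k → F)}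
  {a b : Fin k → F} {φa φb : (Fin k → F) →ₗ[F] F}

-- `φa, φb` is the basis, dual to `a, b`, of the plane of linear forms vanishing on `Y`.
structure IsPencilBasis (S Y : Finset (Fin k → F)) (a b : Fin k → F)
    (φa φb : (Fin k → F) →ₗ[F] F) : Prop where
  subset : Y ⊆ S
  card_eq : Y.card = k - 2
  left_mem : a ∈ S
  right_mem : b ∈ S
  left_notMem : a ∉ Y
  right_notMem : b ∉ Y
  ne : a ≠ b
  left_apply_left : φa a = 1
  left_vanishes : ∀ y ∈ insert b Y, φa y = 0
  right_apply_right : φb b = 1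
  right_vanishes : ∀ y ∈ insert a Y, φb y = 0

namespace IsPencilBasis

theorem eq_smul_add_smul (hP : IsPencilBasis S Y a b φa φb) (hS : IsArc S) (hk : 2 ≤ k)
    {γ : (Fin k → F) →ₗ[F] F} (hγ : ∀ y ∈ Y, γ y = 0) : γ = γ a • φa + γ b • φb := by
  refine sub_eq_zero.1 <| hS.eq_zero_of_vanishes_insert_insert hk hP.subset hP.card_eq
    hP.left_mem hP.right_mem hP.left_notMem hP.right_notMem hP.ne (fun y hy => ?_) ?_ ?_
  · simp [hγ y hy, hP.left_vanishes y (mem_insert_of_mem hy),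
      hP.right_vanishes y (mem_insert_of_mem hy)]
  · simp [hP.left_apply_left, hP.right_vanishes a (mem_insert_self a Y)]
  · simp [hP.right_apply_right, hP.left_vanishes b (mem_insert_self b Y)]

theorem of_dual {W : Finset (Fin k → F)} (hWY : insert a (insert b Y) = W) (hWS : W ⊆ S)
    (hWc : W.card = k) (hab : a ≠ b) (haY : a ∉ Y) (hbY : b ∉ Y)
    (hφa : φa a = 1) (hφaW : ∀ v ∈ W, v ≠ a → φa v = 0)
    (hφb : φb b = 1) (hφbW : ∀ v ∈ W, v ≠ b → φb v = 0) : IsPencilBasis S Y a b φa φb := by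
  subst hWY
  have hcard := hWc
  rw [card_insert_of_notMem (by simp [hab, haY]), card_insert_of_notMem hbY] at hcard
  refine ⟨(subset_insert _ _).trans ((subset_insert _ _).trans hWS), by omega,
    hWS (mem_insert_self a _), hWS (mem_insert_of_mem (mem_insert_self b Y)), haY, hbY, hab, hφa,
    fun v hv => hφaW v (mem_insert_of_mem hv) ?_, hφb, fun v hv => hφbW v ?_ ?_⟩
  · rintro rfl
    simp_all
  · rw [insert_comm]
    exact mem_insert_of_mem hv
  · rintro rfl
    simp_all

theorem insert_insert_subset (hP : IsPencilBasis S Y a b φa φb) : insert a (insert b Y) ⊆ S :=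
  insert_subset hP.left_mem (insert_subset hP.right_mem hP.subset)

theorem card_insert_insert (hP : IsPencilBasis S Y a b φa φb) (hk : 2 ≤ k) :
    (insert a (insert b Y)).card = k := by
  rw [card_insert_of_notMem (by simp [hP.ne, hP.left_notMem]),
    card_insert_of_notMem hP.right_notMem, hP.card_eq]
  omega

theorem symm (hP : IsPencilBasis S Y a b φa φb) : IsPencilBasis S Y b a φb φa :=
  ⟨hP.subset, hP.card_eq, hP.right_mem, hP.left_mem, hP.right_notMem, hP.left_notMem,
    hP.ne.symm, hP.right_apply_right, hP.right_vanishes, hP.left_apply_left, hP.left_vanishes⟩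

theorem left_apply_ne_zero (hP : IsPencilBasis S Y a b φa φb) (hS : IsArc S) (hk : 2 ≤ k)
    {c : Fin k → F} (hc : c ∈ S \ insert a (insert b Y)) : φa c ≠ 0 := by
  intro h0
  obtain ⟨hcS, hcY, -, hcb⟩ := mem_sdiff_insert_insert.1 hc
  have := hS.eq_zero_of_vanishes_insert_insert hk hP.subset hP.card_eq hP.right_mem hcS
    hP.right_notMem hcY (Ne.symm hcb) (fun y hy => hP.left_vanishes y (mem_insert_of_mem hy))
    (hP.left_vanishes b (mem_insert_self b Y)) h0
  simpa [this] using hP.left_apply_left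

theorem right_apply_ne_zero (hP : IsPencilBasis S Y a b φa φb) (hS : IsArc S) (hk : 2 ≤ k)
    {c : Fin k → F} (hc : c ∈ S \ insert a (insert b Y)) : φb c ≠ 0 :=
  hP.symm.left_apply_ne_zero hS hk (by rwa [insert_comm])

-- `c ↦ -φa c / φb c` is the slope of the hyperplane through `Y` and `c`.
theorem injOn_secant_slope (hP : IsPencilBasis S Y a b φa φb) (hS : IsArc S) (hk : 2 ≤ k) :
    Set.InjOn (fun c => -(φa c / φb c)) ↑(S \ insert a (insert b Y)) := by
  intro c hc c' hc' hslope
  by_contra hne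
  obtain ⟨hcS, hcY, -, -⟩ := mem_sdiff_insert_insert.1 hc
  obtain ⟨hc'S, hc'Y, -, -⟩ := mem_sdiff_insert_insert.1 hc'
  have hb := hP.right_apply_ne_zero hS hk hc
  have hb' := hP.right_apply_ne_zero hS hk hc'
  have hγ := hS.eq_zero_of_vanishes_insert_insert hk hP.subset hP.card_eq hcS hc'S hcY hc'Y hne
    (φ := φb c • φa - φa c • φb)
    (fun y hy => by simp [hP.left_vanishes y (mem_insert_of_mem hy),
      hP.right_vanishes y (mem_insert_of_mem hy)])
    (by simp [mul_comm]) (by simp only [neg_inj] at hslope; field_simp at hslope; simp [hslope])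
  simpa [hP.left_apply_left, hP.right_vanishes a (mem_insert_self a Y), hb] using
    congrArg (· a) hγ

theorem eq_smul_of_slope_eq (hP : IsPencilBasis S Y a b φa φb) (hS : IsArc S) (hk : 2 ≤ k)
    {α β : (Fin k → F) →ₗ[F] F} (hαY : ∀ y ∈ Y, α y = 0) (hβY : ∀ y ∈ Y, β y = 0)
    (hα : α a ≠ 0) (hβ : β a ≠ 0) (hslope : α b / α a = β b / β a) :
    α = (α a / β a) • β := by
  refine sub_eq_zero.1 <| hS.eq_zero_of_vanishes_insert_insert hk hP.subset hP.card_eq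
    hP.left_mem hP.right_mem hP.left_notMem hP.right_notMem hP.ne
    (fun y hy => by simp [hαY y hy, hβY y hy]) (by simp [hβ]) ?_
  field_simp at hslope
  simp only [LinearMap.sub_apply, LinearMap.smul_apply, smul_eq_mul]
  field_simp
  linear_combination hslope

theorem slope_ne_secant_slope (hP : IsPencilBasis S Y a b φa φb) (hS : IsArc S) (hk : 2 ≤ k)
    {α : (Fin k → F) →ₗ[F] F} (hαY : ∀ y ∈ Y, α y = 0) (hα : α a ≠ 0) {c : Fin k → F}
    (hc : c ∈ S \ insert a (insert b Y)) (hαc : α c ≠ 0) :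
    α b / α a ≠ -(φa c / φb c) := by
  intro hslope
  have hb := hP.right_apply_ne_zero hS hk hc
  apply hαc
  rw [hP.eq_smul_add_smul hS hk hαY]
  field_simp at hslope
  simp only [LinearMap.add_apply, LinearMap.smul_apply, smul_eq_mul]
  linear_combination hslope

end IsPencilBasis

end Pencil

section Tangent

variable {F : Type} [Field F] [DecidableEq F] {k t : ℕ} {S : Finset (Fin k → F)}
  {T : Finset (Fin k → F) → (Fin k → F) → F}

theorem IsTangentFamily.apply_ne_zero (hT : IsTangentFamily t S T) {Y : Finset (Fin k → F)}
    (hY : Y ⊆ S) (hYc : Y.card = k - 2) {s : Fin k → F} (hs : s ∈ S) (hsY : s ∉ Y) :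
    T Y s ≠ 0 := by
  obtain ⟨Φ, -, -, -, hΦS, hΦT⟩ := hT Y hY hYc
  rw [hΦT]
  exact prod_ne_zero_iff.2 fun α hα => hΦS α hα s hs hsY

-- The slopes of the `t` tangents at `Y` and of the `|S| - k` secants through `Y` are the
-- `q - 1` nonzero elements of `F`, each once; Wilson's theorem multiplies them to `-1`.
theorem IsTangentFamily.div_mul_prod_secant_slope_eq_neg_one [Fintype F]
    (hT : IsTangentFamily t S T) (hS : IsArc S) (hk : 2 ≤ k)
    (ht : S.card + t = Fintype.card F + k - 1)
    {Y : Finset (Fin k → F)} {a b : Fin k → F} {φa φb : (Fin k → F) →ₗ[F] F}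
    (hP : IsPencilBasis S Y a b φa φb) :
    T Y b / T Y a * ∏ c ∈ S \ insert a (insert b Y), -(φa c / φb c) = -1 := by
  obtain ⟨Φ, hΦc, hΦind, hΦY, hΦS, hΦT⟩ := hT Y hP.subset hP.card_eq
  set C := S \ insert a (insert b Y)
  have hΦa : ∀ α ∈ Φ, α a ≠ 0 := fun α hα => hΦS α hα a hP.left_mem hP.left_notMem
  have hΦb : ∀ α ∈ Φ, α b ≠ 0 := fun α hα => hΦS α hα b hP.right_mem hP.right_notMem
  have hinjΦ : Set.InjOn (fun α : (Fin k → F) →ₗ[F] F => α b / α a) Φ := by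
    intro α hα β hβ hslope
    by_contra hne
    exact hΦind α hα β hβ hne _ <| hP.eq_smul_of_slope_eq hS hk (hΦY α hα) (hΦY β hβ)
      (hΦa α hα) (hΦa β hβ) hslope
  have hdisj : Disjoint (Φ.image fun α => α b / α a) (C.image fun c => -(φa c / φb c)) := by
    simp only [disjoint_left, mem_image, not_exists, not_and]
    rintro _ ⟨α, hα, rfl⟩ c hc
    exact (hP.slope_ne_secant_slope hS hk (hΦY α hα) (hΦa α hα) hc
      (hΦS α hα c (mem_sdiff.1 hc).1 (mem_sdiff_insert_insert.1 hc).2.1)).symm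
  have hSk := hP.card_insert_insert hk ▸ card_le_card hP.insert_insert_subset
  have hΦprod : T Y b / T Y a = ∏ x ∈ Φ.image fun α => α b / α a, x := by
    rw [prod_image hinjΦ, hΦT, hΦT, prod_div_distrib]
  have hCprod : ∏ c ∈ C, -(φa c / φb c) = ∏ x ∈ C.image fun c => -(φa c / φb c), x := by
    rw [prod_image (hP.injOn_secant_slope hS hk)]
  rw [hΦprod, hCprod, ← prod_union hdisj]
  apply FiniteField.prod_eq_neg_one_of_card
  · simp only [mem_union, mem_image, not_or, not_exists, not_and]
    exact ⟨fun α hα => div_ne_zero (hΦb α hα) (hΦa α hα), fun c hc => neg_ne_zero.2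
      (div_ne_zero (hP.left_apply_ne_zero hS hk hc) (hP.right_apply_ne_zero hS hk hc))⟩
  · rw [card_union_of_disjoint hdisj, card_image_of_injOn hinjΦ,
      card_image_of_injOn (hP.injOn_secant_slope hS hk), hΦc,
      card_sdiff_of_subset hP.insert_insert_subset, hP.card_insert_insert hk]
    omega

theorem IsTangentFamily.apply_insert_ne_zero (hT : IsTangentFamily t S T) (hk : 3 ≤ k)
    {E : Finset (Fin k → F)} (hE : E ⊆ S) (hEc : E.card = k - 3) {u v : Fin k → F} (hu : u ∈ S)
    (huE : u ∉ E) (hv : v ∈ S) (hvE : v ∉ E) (huv : u ≠ v) : T (insert u E) v ≠ 0 := by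
  refine hT.apply_ne_zero (insert_subset hu hE) ?_ hv (by simp [huv.symm, hvE])
  rw [card_insert_of_notMem huE, hEc]
  omega

theorem IsArc.exists_pencilBasis_triangle (hS : IsArc S) {E : Finset (Fin k → F)}
    (hE : E ⊆ S) (hEc : E.card = k - 3) (hk : 3 ≤ k) {x y z : Fin k → F} (hx : x ∈ S)
    (hy : y ∈ S) (hz : z ∈ S) (hxE : x ∉ E) (hyE : y ∉ E) (hzE : z ∉ E) (hxy : x ≠ y)
    (hxz : x ≠ z) (hyz : y ≠ z) :
    ∃ φx φy φz : (Fin k → F) →ₗ[F] F, IsPencilBasis S (insert x E) z y φz φy ∧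
      IsPencilBasis S (insert y E) x z φx φz ∧ IsPencilBasis S (insert z E) y x φy φx := by
  set W := insert x (insert y (insert z E)) with hW
  have hWS : W ⊆ S := insert_subset hx (insert_subset hy (insert_subset hz hE))
  have hWc : W.card = k := by
    rw [hW, card_insert_of_notMem (by simp [hxy, hxz, hxE]),
      card_insert_of_notMem (by simp [hyz, hyE]), card_insert_of_notMem hzE, hEc]
    omega
  obtain ⟨φx, hφx, hφxW⟩ := hS.exists_dual hWS hWc (w := x) (by simp [hW])
  obtain ⟨φy, hφy, hφyW⟩ := hS.exists_dual hWS hWc (w := y) (by simp [hW])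
  obtain ⟨φz, hφz, hφzW⟩ := hS.exists_dual hWS hWc (w := z) (by simp [hW])
  refine ⟨φx, φy, φz, .of_dual ?_ hWS hWc hyz.symm (by simp [hxz.symm, hzE])
    (by simp [hxy.symm, hyE]) hφz hφzW hφy hφyW, .of_dual ?_ hWS hWc hxz (by simp [hxy, hxE])
    (by simp [hyz.symm, hzE]) hφx hφxW hφz hφzW, .of_dual ?_ hWS hWc hxy.symm
    (by simp [hyz, hyE]) (by simp [hxz, hxE]) hφy hφyW hφx hφxW⟩ <;>
  · ext
    simp only [hW, mem_insert]
    tauto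

-- The three instances of `div_mul_prod_secant_slope_eq_neg_one` share their secants, whose
-- slopes cancel up to the sign `(-1) ^ (|S| - k) = (-1) ^ t`.
theorem IsTangentFamily.div_mul_div_mul_div_eq_neg_one_pow [Fintype F]
    (hT : IsTangentFamily t S T) (hS : IsArc S) (hk : 3 ≤ k)
    (ht : S.card + t = Fintype.card F + k - 1)
    {E : Finset (Fin k → F)} (hE : E ⊆ S) (hEc : E.card = k - 3) {x y z : Fin k → F}
    (hx : x ∈ S) (hy : y ∈ S) (hz : z ∈ S) (hxE : x ∉ E) (hyE : y ∉ E) (hzE : z ∉ E)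
    (hxy : x ≠ y) (hxz : x ≠ z) (hyz : y ≠ z) :
    T (insert x E) y / T (insert x E) z * (T (insert y E) z / T (insert y E) x) *
      (T (insert z E) x / T (insert z E) y) = (-1) ^ (t + 1) := by
  obtain ⟨φx, φy, φz, hPx, hPy, hPz⟩ :=
    hS.exists_pencilBasis_triangle hE hEc hk hx hy hz hxE hyE hzE hxy hxz hyz
  set C := S \ insert z (insert y (insert x E))
  have hCy : S \ insert x (insert z (insert y E)) = C := by
    congr 1; ext; simp only [mem_insert]; tauto
  have hCz : S \ insert y (insert x (insert z E)) = C := by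
    congr 1; ext; simp only [mem_insert]; tauto
  have hsecx := hT.div_mul_prod_secant_slope_eq_neg_one hS (by omega) ht hPx
  have hsecy := hCy ▸ hT.div_mul_prod_secant_slope_eq_neg_one hS (by omega) ht hPy
  have hsecz := hCz ▸ hT.div_mul_prod_secant_slope_eq_neg_one hS (by omega) ht hPz
  have hsec : (∏ c ∈ C, -(φz c / φy c)) * (∏ c ∈ C, -(φx c / φz c)) *
      (∏ c ∈ C, -(φy c / φx c)) = (-1) ^ t := by
    have hSk := hPx.card_insert_insert (by omega) ▸ card_le_card hPx.insert_insert_subset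
    rw [prod_neg_div_mul_prod_neg_div_mul_prod_neg_div
      (fun c hc => hPx.left_apply_ne_zero hS (by omega) hc)
      (fun c hc => hPx.right_apply_ne_zero hS (by omega) hc)
      (fun c hc => hPy.left_apply_ne_zero hS (by omega) (hCy ▸ hc)),
      card_sdiff_of_subset hPx.insert_insert_subset, hPx.card_insert_insert (by omega)]
    exact FiniteField.neg_one_pow_eq_of_add_eq (by omega)
  set r₁ := T (insert x E) y / T (insert x E) z
  set r₂ := T (insert y E) z / T (insert y E) x
  set r₃ := T (insert z E) x / T (insert z E) y
  have hsq : (-1 : F) ^ t * (-1) ^ t = 1 := by rw [← mul_pow]; simp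
  calc r₁ * r₂ * r₃ = r₁ * r₂ * r₃ * ((-1) ^ t * (-1) ^ t) := by rw [hsq, mul_one]
    _ = (r₁ * ∏ c ∈ C, -(φz c / φy c)) * (r₂ * ∏ c ∈ C, -(φx c / φz c)) *
        (r₃ * ∏ c ∈ C, -(φy c / φx c)) * (-1) ^ t := by rw [← hsec]; ring
    _ = (-1) ^ (t + 1) := by rw [hsecx, hsecy, hsecz]; ring

theorem IsTangentFamily.triangle [Fintype F] (hT : IsTangentFamily t S T) (hS : IsArc S)
    (hk : 3 ≤ k) (ht : S.card + t = Fintype.card F + k - 1) {E : Finset (Fin k → F)}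
    (hE : E ⊆ S) (hEc : E.card = k - 3) {x y z : Fin k → F} (hx : x ∈ S) (hy : y ∈ S)
    (hz : z ∈ S) (hxE : x ∉ E) (hyE : y ∉ E) (hzE : z ∉ E) (hxy : x ≠ y) (hxz : x ≠ z)
    (hyz : y ≠ z) :
    T (insert x E) y * T (insert y E) z * T (insert z E) x =
      (-1) ^ (t + 1) * (T (insert x E) z * T (insert y E) x * T (insert z E) y) := by
  have h := hT.div_mul_div_mul_div_eq_neg_one_pow hS hk ht hE hEc hx hy hz hxE hyE hzE hxy hxz hyz
  have := hT.apply_insert_ne_zero hk hE hEc hx hxE hz hzE hxz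
  have := hT.apply_insert_ne_zero hk hE hEc hy hyE hx hxE hxy.symm
  have := hT.apply_insert_ne_zero hk hE hEc hz hzE hy hyE hyz.symm
  field_simp at h
  linear_combination h

end Tangent

section SegreBase

variable {V : Type} {S D : Finset V} {n : ℕ} {a b : ℕ → V}

structure IsSegreConfig (S D : Finset V) (n : ℕ) (a b : ℕ → V) : Prop where
  mem_left : ∀ m < n, a m ∈ S
  mem_right : ∀ m < n, b m ∈ S
  left_notMem : ∀ m < n, a m ∉ D
  right_notMem : ∀ m < n, b m ∉ D
  injOn_left : Set.InjOn a (Set.Iio n)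
  injOn_right : Set.InjOn b (Set.Iio n)
  left_ne_right : ∀ m < n, ∀ m' < n, a m ≠ b m'

namespace IsSegreConfig

theorem comp_swap (h : IsSegreConfig S D n a b) {i j : ℕ} (hi : i < n) (hj : j < n) :
    IsSegreConfig S D n a (b ∘ Equiv.swap i j) := by
  have hswap : Set.MapsTo (Equiv.swap i j) (Set.Iio n) (Set.Iio n) := fun m hm => by
    simp only [Set.mem_Iio] at hm ⊢
    rw [Equiv.swap_apply_def]
    split_ifs <;> omega
  exact ⟨h.mem_left, fun m hm => h.mem_right _ (hswap hm), h.left_notMem,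
    fun m hm => h.right_notMem _ (hswap hm), h.injOn_left,
    h.injOn_right.comp (Equiv.swap i j).injective.injOn hswap,
    fun m hm m' hm' => h.left_ne_right m hm _ (hswap hm')⟩

theorem of_nodup {A B : List V}
    (hA : A.length = n) (hB : B.length = n) (hnd : (A ++ B).Nodup) (hin : ∀ v ∈ A ++ B, v ∈ S)
    (hdisj : ∀ v ∈ A ++ B, v ∉ D) (d : V) : IsSegreConfig S D n (A.getD · d) (B.getD · d) := by
  obtain ⟨hndA, hndB, hAB⟩ := List.nodup_append.1 hnd
  have hmemA : ∀ m < n, A.getD m d ∈ A := fun m hm => by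
    rw [List.getD_eq_getElem _ _ (hA ▸ hm)]; exact List.getElem_mem _
  have hmemB : ∀ m < n, B.getD m d ∈ B := fun m hm => by
    rw [List.getD_eq_getElem _ _ (hB ▸ hm)]; exact List.getElem_mem _
  refine ⟨fun m hm => hin _ (List.mem_append_left _ (hmemA m hm)),
    fun m hm => hin _ (List.mem_append_right _ (hmemB m hm)),
    fun m hm => hdisj _ (List.mem_append_left _ (hmemA m hm)),
    fun m hm => hdisj _ (List.mem_append_right _ (hmemB m hm)),
    fun m hm m' hm' he => ?_, fun m hm m' hm' he => ?_,
    fun m hm m' hm' => hAB _ (hmemA m hm) _ (hmemB m' hm')⟩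
  · simp only [Set.mem_Iio] at hm hm'
    rw [List.getD_eq_getElem _ _ (hA ▸ hm), List.getD_eq_getElem _ _ (hA ▸ hm')] at he
    exact hndA.getElem_inj_iff.1 he
  · simp only [Set.mem_Iio] at hm hm'
    rw [List.getD_eq_getElem _ _ (hB ▸ hm), List.getD_eq_getElem _ _ (hB ▸ hm')] at he
    exact hndB.getElem_inj_iff.1 he

end IsSegreConfig

variable [DecidableEq V]

def segreBase (D : Finset V) (a b : ℕ → V) (n i j : ℕ) : Finset V :=
  D ∪ (range i).image a ∪ (Ico j n).image b

theorem segreBase_succ_left (i j : ℕ) :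
    segreBase D a b n (i + 1) j = insert (a i) (segreBase D a b n i j) := by
  rw [segreBase, segreBase, range_add_one, image_insert, union_insert, insert_union]

theorem segreBase_eq_insert_right {i j : ℕ} (hj : j < n) :
    segreBase D a b n i j = insert (b j) (segreBase D a b n i (j + 1)) := by
  rw [segreBase, segreBase, ← insert_Ico_add_one_left_eq_Ico hj, image_insert, union_insert]

theorem segreBase_comp_swap {i m j : ℕ} (hi : i + 1 < n) (hj : j ≠ i + 1) :
    segreBase D a (b ∘ Equiv.swap i (i + 1)) n m j = segreBase D a b n m j := by
  rw [segreBase, segreBase, image_comp_swap]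
  simp only [mem_Ico]
  omega

namespace IsSegreConfig

theorem segreBase_subset (h : IsSegreConfig S D n a b) (hD : D ⊆ S) {i j : ℕ} (hi : i ≤ n) :
    segreBase D a b n i j ⊆ S := by
  simp only [segreBase, union_subset_iff, image_subset_iff, mem_range, mem_Ico]
  exact ⟨⟨hD, fun m hm => h.mem_left m (by omega)⟩, fun m hm => h.mem_right m hm.2⟩

theorem left_notMem_segreBase (h : IsSegreConfig S D n a b) {i j m : ℕ} (him : i ≤ m)
    (hm : m < n) : a m ∉ segreBase D a b n i j := by
  simp only [segreBase, mem_union, mem_image, mem_range, mem_Ico, not_or, not_exists, not_and]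
  refine ⟨⟨h.left_notMem m hm, fun l hl hlm => ?_⟩,
    fun l hl => h.left_ne_right m hm l hl.2 ∘ Eq.symm⟩
  have := h.injOn_left (show l < n by omega) hm hlm
  omega

theorem right_notMem_segreBase (h : IsSegreConfig S D n a b) {i j m : ℕ} (hi : i ≤ n)
    (hmj : m < j) (hm : m < n) : b m ∉ segreBase D a b n i j := by
  simp only [segreBase, mem_union, mem_image, mem_range, mem_Ico, not_or, not_exists, not_and]
  refine ⟨⟨h.right_notMem m hm, fun l hl => h.left_ne_right l (by omega) m hm⟩, fun l hl hlm => ?_⟩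
  have := h.injOn_right hl.2 hm hlm
  omega

theorem card_segreBase (h : IsSegreConfig S D n a b) {i j : ℕ} (hij : i ≤ j) (hj : j ≤ n) :
    (segreBase D a b n i j).card = D.card + i + (n - j) := by
  have hinja : Set.InjOn a (Finset.range i) := h.injOn_left.mono fun m hm => by
    simp only [coe_range, Set.mem_Iio] at hm ⊢; omega
  have hinjb : Set.InjOn b (Finset.Ico j n) := h.injOn_right.mono fun m hm => by
    simp only [coe_Ico, Set.mem_Ico, Set.mem_Iio] at hm ⊢; omega
  rw [segreBase, card_union_of_disjoint, card_union_of_disjoint, card_image_of_injOn hinja,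
    card_image_of_injOn hinjb, card_range, Nat.card_Ico]
  · simp only [disjoint_right, mem_image, mem_range]
    rintro _ ⟨m, hm, rfl⟩
    exact h.left_notMem m (by omega)
  · simp only [disjoint_right, mem_union, mem_image, mem_range, mem_Ico, not_or, not_exists,
      not_and]
    rintro _ ⟨m, hm, rfl⟩
    exact ⟨h.right_notMem m hm.2, fun l hl => h.left_ne_right l (by omega) m hm.2⟩

end IsSegreConfig

end SegreBase

def segreProd {V F : Type} [DecidableEq V] [Field F] (T : Finset V → V → F) (D : Finset V)
    (a b : ℕ → V) (n : ℕ) : F :=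
  ∏ m ∈ range n, T (segreBase D a b n m (m + 1)) (a m) / T (segreBase D a b n m (m + 1)) (b m)

theorem segreP_eq_segreProd {F : Type} [Field F] [DecidableEq F] {k n : ℕ}
    {T : Finset (Fin k → F) → (Fin k → F) → F} {D : Finset (Fin k → F)} {a b : ℕ → Fin k → F}
    {A B : List (Fin k → F)} (hA : A.length = n) (hB : B.length = n)
    (ha : ∀ m < n, A.getD m 0 = a m) (hb : ∀ m < n, B.getD m 0 = b m) :
    segreP T D A B = segreProd T D a b n := by
  unfold segreP segreProd segreBase
  rw [hA]
  refine prod_congr rfl fun m hm => ?_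
  rw [mem_range] at hm
  rw [List.toFinset_take_eq_image A 0 (by omega), List.toFinset_drop_eq_image B 0, hB,
    image_congr fun l hl => ha l (by simp at hl; omega),
    image_congr fun l hl => hb l (by simp at hl; omega), ha m hm, hb m hm, div_eq_mul_inv]

section Swap

variable {F : Type} [Field F] [Fintype F] [DecidableEq F] {k t n : ℕ} {S D : Finset (Fin k → F)}
  {T : Finset (Fin k → F) → (Fin k → F) → F} {a b : ℕ → Fin k → F}

theorem IsTangentFamily.segreProd_comp_swap_succ (hT : IsTangentFamily t S T) (hS : IsArc S)
    (hk : 3 ≤ k) (ht : S.card + t = Fintype.card F + k - 1) (hD : D ⊆ S)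
    (hDc : D.card + n + 1 = k) (h : IsSegreConfig S D n a b) {i : ℕ} (hi : i + 1 < n) :
    segreProd T D a (b ∘ Equiv.swap i (i + 1)) n = (-1) ^ (t + 1) * segreProd T D a b n := by
  set E := segreBase D a b n i (i + 1 + 1) with hE
  have hES : E ⊆ S := h.segreBase_subset hD (by omega)
  have hEc : E.card = k - 3 := by
    rw [h.card_segreBase (i := i) (j := i + 1 + 1) (by omega) (by omega)]
    omega
  have hxE : a i ∉ E := h.left_notMem_segreBase le_rfl (by omega)
  have hyE : b (i + 1) ∉ E := h.right_notMem_segreBase (by omega) (by omega) hi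
  have hzE : b i ∉ E := h.right_notMem_segreBase (by omega) (by omega) (by omega)
  have hx := h.mem_left i (by omega)
  have hy := h.mem_right (i + 1) hi
  have hz := h.mem_right i (by omega)
  have hxy := h.left_ne_right i (by omega) (i + 1) hi
  have hxz := h.left_ne_right i (by omega) i (by omega)
  have hyz : b (i + 1) ≠ b i :=
    h.injOn_right.ne (Set.mem_Iio.2 hi) (Set.mem_Iio.2 (by omega)) (by omega)
  have htri := hT.triangle hS hk ht hES hEc hx hy hz hxE hyE hzE hxy hxz hyz
  unfold segreProd
  refine prod_eq_mul_prod_of_pair (i := i) (j := i + 1) (mem_range.2 (by omega))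
    (mem_range.2 hi) (by omega) ?_ fun m _ hmi hmi1 => ?_
  · rw [segreBase_eq_insert_right hi, segreBase_eq_insert_right hi, segreBase_comp_swap hi
      (by omega), segreBase_comp_swap hi (by omega), segreBase_succ_left, ← hE]
    simp only [Function.comp_apply, Equiv.swap_apply_left, Equiv.swap_apply_right]
    have := hT.apply_insert_ne_zero hk hES hEc hx hxE hz hzE hxz
    have := hT.apply_insert_ne_zero hk hES hEc hx hxE hy hyE hxy
    have := hT.apply_insert_ne_zero hk hES hEc hy hyE hz hzE hyz
    have := hT.apply_insert_ne_zero hk hES hEc hz hzE hy hyE hyz.symm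
    field_simp
    linear_combination T (insert (a i) E) (a (i + 1)) * htri
  · rw [segreBase_comp_swap hi (by omega), Function.comp_apply,
      Equiv.swap_apply_of_ne_of_ne hmi hmi1]

-- `swap i j` is `swap i (j - 1)` conjugated by the adjacent transposition `swap (j - 1) j`.
theorem IsTangentFamily.segreProd_comp_swap (hT : IsTangentFamily t S T) (hS : IsArc S)
    (hk : 3 ≤ k) (ht : S.card + t = Fintype.card F + k - 1) (hD : D ⊆ S)
    (hDc : D.card + n + 1 = k) (h : IsSegreConfig S D n a b) {i j : ℕ} (hij : i < j)
    (hj : j < n) :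
    segreProd T D a (b ∘ Equiv.swap i j) n = (-1) ^ (t + 1) * segreProd T D a b n := by
  obtain ⟨d, rfl⟩ := Nat.exists_eq_add_of_lt hij
  induction d generalizing b with
  | zero => exact hT.segreProd_comp_swap_succ hS hk ht hD hDc h hj
  | succ d ih =>
    set j' := i + d + 1
    have hj' : j' + 1 < n := by omega
    have hconj : Equiv.swap i (j' + 1) =
        Equiv.swap j' (j' + 1) * Equiv.swap i j' * Equiv.swap j' (j' + 1) := by
      rw [Equiv.swap_mul_swap_mul_swap (by omega) (by omega), Equiv.swap_comm]
    have hsq : (-1 : F) ^ (t + 1) * (-1) ^ (t + 1) = 1 := by rw [← mul_pow]; simp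
    rw [show i + (d + 1) + 1 = j' + 1 by omega, hconj, Equiv.Perm.coe_mul, Equiv.Perm.coe_mul,
      ← Function.comp_assoc, ← Function.comp_assoc,
      hT.segreProd_comp_swap_succ hS hk ht hD hDc
        ((h.comp_swap (by omega) hj').comp_swap (by omega) (by omega)) hj',
      ih (h.comp_swap (by omega) hj') (by omega) (by omega),
      hT.segreProd_comp_swap_succ hS hk ht hD hDc h hj']
    linear_combination (-1) ^ (t + 1) * segreProd T D a b n * hsq

end Swap

theorem statement7_general (k q t n : ℕ)
    (hk : 3 ≤ k)
    (F : Type) [Field F] [Fintype F] [DecidableEq F] (hF : Fintype.card F = q)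
    (S : Finset (Fin k → F))
    (harc : ∀ A ⊆ S, A.card = k →
      LinearIndependent F (fun v : {x // x ∈ A} => (v : Fin k → F)) ∧
      Submodule.span F (A : Set (Fin k → F)) = ⊤)
    (ht : S.card + t = q + k - 1)
    (T : Finset (Fin k → F) → (Fin k → F) → F) (hT : IsTangentFamily t S T)
    (A B : List (Fin k → F)) (hA : A.length = n) (hB : B.length = n)
    (hnd : (A ++ B).Nodup) (hin : ∀ v ∈ A ++ B, v ∈ S)
    (D : Finset (Fin k → F)) (hD : D ⊆ S) (hDcard : D.card + n + 1 = k)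
    (hdisj : ∀ v ∈ A ++ B, v ∉ D)
    (i j : ℕ) (hi : i < n) (hj : j < n) (hij : i ≠ j)
    (Bstar : List (Fin k → F))
    (hBstar : Bstar = (B.set i (B.getD j 0)).set j (B.getD i 0)) :
    segreP T D A Bstar = (-1 : F) ^ (t + 1) * segreP T D A B := by
  wlog hlt : i < j generalizing i j Bstar
  · refine this j i hj hi hij.symm Bstar ?_ (by omega)
    rw [hBstar, List.set_comm _ _ hij]
  have hS : IsArc S := fun W hW hWc => (harc W hW hWc).2
  rw [segreP_eq_segreProd hA hB (fun m _ => rfl) (fun m _ => rfl),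
    segreP_eq_segreProd (b := (B.getD · 0) ∘ Equiv.swap i j) hA (by simp [hBstar, hB])
      (fun m _ => rfl) (fun m _ => by rw [hBstar, B.getD_set_set_swap 0 (hB ▸ hi) (hB ▸ hj)]; rfl),
    hT.segreProd_comp_swap hS hk (hF ▸ ht) hD hDcard (.of_nodup hA hB hnd hin hdisj 0) hlt hj]

/-- interchanging two entries of `B` in the Segre product `P_D(A, B)`
multiplies it by `(−1)^{t+1}`:  `P_D(A, B*) = (−1)^{t+1} P_D(A, B)`. -/
theorem statement7 (p h k q t n : ℕ) (hp : p.Prime) (hh : 1 ≤ h) (hq : q = p ^ h)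
    (hk : 3 ≤ k)
    (F : Type) [Field F] [Fintype F] [DecidableEq F] (hF : Fintype.card F = q)
    (S : Finset (Fin k → F))
    (harc : ∀ A ⊆ S, A.card = k →
      LinearIndependent F (fun v : {x // x ∈ A} => (v : Fin k → F)) ∧
      Submodule.span F (A : Set (Fin k → F)) = ⊤)
    (ht : S.card + t = q + k - 1) (ht1 : 1 ≤ t) (hSk : k ≤ S.card)
    (T : Finset (Fin k → F) → (Fin k → F) → F) (hT : IsTangentFamily t S T)
    (A B : List (Fin k → F)) (hA : A.length = n) (hB : B.length = n)
    (hnd : (A ++ B).Nodup) (hin : ∀ v ∈ A ++ B, v ∈ S)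
    (D : Finset (Fin k → F)) (hD : D ⊆ S) (hDcard : D.card + n + 1 = k)
    (hdisj : ∀ v ∈ A ++ B, v ∉ D)
    (i j : ℕ) (hi : i < n) (hj : j < n) (hij : i ≠ j)
    (Bstar : List (Fin k → F))
    (hBstar : Bstar = (B.set i (B.getD j 0)).set j (B.getD i 0)) :
    segreP T D A Bstar = (-1 : F) ^ (t + 1) * segreP T D A B :=
  statement7_general k q t n hk F hF S harc ht T hT A B hA hB hnd hin D hD hDcard hdisj i j hi hj
    hij Bstar hBstar
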